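/- arXiv:2012.04871 — 4 statements merged into one kernel-verified Lean document; each statement's English description precedes it below -/
import Mathlib

section
/- For all nonnegative integers n and p, and all real x and λ, the truncated degenerate Bell polynomial satisfies Bel^{(p)}_{n,λ}(x) = Σ_{k=0}^{n} S_{2,λ}(n,k) x^k / C(k+p, k), where C(k+p,k) is the binomial coefficient. -/
/-!
Since `(a + b)_{n,λ} = ∑ C(n,i) (a)_{i,λ} (b)_{n-i,λ}`, the series `e_λ^x(t)` satisfy
`e_λ^{a+b}(t) = e_λ^a(t) e_λ^b(t)`, so `e_λ(t)^j = e_λ^j(t)`. By the binomial theorem,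
`n! [tⁿ] (e_λ(t) - 1)^k` is then the `k`-th forward difference at `0` of `y ↦ (y)_{n,λ}`.
Expanding `(y)_{n,λ} = ∑ S_{2,λ}(n,i) (y)_i` and using `Δ^k (y)_i |_{y=0} = k! δ_{ik}` gives
`n! [tⁿ] (e_λ(t) - 1)^k = k! S_{2,λ}(n,k)`; finally `p! k! / (k+p)! = 1 / C(k+p,k)`.
-/

open Finset

/-- Degenerate falling factorial `(x)_{n,λ} = x(x-λ)⋯(x-(n-1)λ)`. -/
def degFall (l x : ℝ) (n : ℕ) : ℝ := ∏ i ∈ Finset.range n, (x - i * l)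

/-- Ordinary falling factorial `(x)_n = x(x-1)⋯(x-n+1)`. -/
def fall (x : ℝ) (n : ℕ) : ℝ := ∏ i ∈ Finset.range n, (x - i)

/-- The degenerate exponential `e_λ(t)` as a formal power series. -/
noncomputable def degExpPS (l : ℝ) : PowerSeries ℝ :=
  PowerSeries.mk fun n => degFall l 1 n / (n.factorial : ℝ)

open PowerSeries fwdDiff

theorem degFall_succ (l x : ℝ) (n : ℕ) : degFall l x (n + 1) = degFall l x n * (x - n * l) :=
  prod_range_succ _ _

theorem degFall_add (l a b : ℝ) (n : ℕ) :
    degFall l (a + b) n = ∑ ij ∈ antidiagonal n,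
      (n.choose ij.1 : ℝ) * (degFall l a ij.1 * degFall l b ij.2) := by
  induction n with
  | zero => simp [degFall]
  | succ n ih =>
    rw [sum_antidiagonal_choose_succ_mul (fun i j => degFall l a i * degFall l b j),
      ← sum_add_distrib, degFall_succ, ih, sum_mul]
    refine sum_congr rfl fun ij hij => ?_
    obtain rfl : ij.1 + ij.2 = n := mem_antidiagonal.mp hij
    rw [← Nat.choose_symm_add, degFall_succ, degFall_succ]
    push_cast
    ring

/-- `e_λ^x(t)`, so that `degExpPS l = degExpPowPS l 1`. -/
noncomputable def degExpPowPS (l x : ℝ) : PowerSeries ℝ :=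
  PowerSeries.mk fun n => degFall l x n / (n.factorial : ℝ)

theorem degExpPowPS_zero (l : ℝ) : degExpPowPS l 0 = 1 := by
  ext (_ | n) <;> simp [degExpPowPS, degFall, prod_range_succ', coeff_one]

theorem degExpPowPS_add (l a b : ℝ) :
    degExpPowPS l (a + b) = degExpPowPS l a * degExpPowPS l b := by
  ext n
  simp only [degExpPowPS, coeff_mul, coeff_mk, degFall_add, sum_div]
  refine sum_congr rfl fun ij hij => ?_
  obtain rfl : ij.1 + ij.2 = n := mem_antidiagonal.mp hij
  rw [Nat.cast_add_choose]
  field_simp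

theorem degExpPS_pow (l : ℝ) (j : ℕ) : degExpPS l ^ j = degExpPowPS l j := by
  induction j with
  | zero => simp [degExpPowPS_zero]
  | succ j ih => rw [pow_succ, ih, Nat.cast_succ, degExpPowPS_add]; rfl

theorem factorial_mul_coeff_degExpPS_sub_one_pow (l : ℝ) (n k : ℕ) :
    n.factorial * coeff n ((degExpPS l - 1) ^ k) = (Δ_[1])^[k] (fun y => degFall l y n) 0 := by
  rw [fwdDiff_iter_eq_sum_shift, sub_eq_add_neg, add_pow, map_sum, mul_sum]
  refine sum_congr rfl fun j _ => ?_
  have hC : ((-1) ^ (k - j) * k.choose j : ℝ⟦X⟧) = C ((-1) ^ (k - j) * k.choose j : ℝ) := by simp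
  rw [degExpPS_pow, mul_assoc, hC, coeff_mul_C]
  simp only [degExpPowPS, coeff_mk, zero_add, nsmul_eq_mul, mul_one, zsmul_eq_mul]
  push_cast
  field_simp

theorem fall_natCast (j i : ℕ) : fall j i = i.factorial * j.choose i := by
  rw [fall, ← descPochhammer_eval_eq_prod_range, descPochhammer_eval_eq_descFactorial,
    Nat.descFactorial_eq_factorial_mul_choose, Nat.cast_mul]

theorem fwdDiff_iter_fall_zero (k i : ℕ) :
    (Δ_[1])^[k] (fun y : ℝ => fall y i) 0 = if k = i then (i.factorial : ℝ) else 0 := by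
  have h := congrArg (fun z : ℤ => (i.factorial : ℝ) * z) (fwdDiff_iter_choose_zero i k)
  rw [fwdDiff_iter_eq_sum_shift] at h ⊢
  simpa [fall_natCast, mul_sum, zsmul_eq_mul, mul_left_comm] using h

theorem factorial_mul_coeff_degExpPS_sub_one_pow_of_stirling {l : ℝ} {n : ℕ} {S : ℕ → ℝ}
    (hS : ∀ y : ℝ, degFall l y n = ∑ i ∈ range (n + 1), S i * fall y i) (k : ℕ) :
    n.factorial * coeff n ((degExpPS l - 1) ^ k) =
      if k ∈ range (n + 1) then S k * k.factorial else 0 := by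
  have hfun : (fun y => degFall l y n) = ∑ i ∈ range (n + 1), S i • fun y => fall y i := by
    ext y
    simp [hS]
  simp [factorial_mul_coeff_degExpPS_sub_one_pow, hfun, fwdDiff_iter_fall_zero]

theorem truncated_degenerate_Bell_explicit
    (l x : ℝ) (n p : ℕ) (S2 : ℕ → ℕ → ℝ)
    (hS : ∀ (y : ℝ) (m : ℕ),
      degFall l y m = ∑ k ∈ Finset.range (m + 1), S2 m k * fall y k)
    (Bel : ℕ → ℝ)
    (hBel : ∀ m : ℕ,
      (∑' k : ℕ, (p.factorial : ℝ) * x ^ k / ((k + p).factorial : ℝ) *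
        PowerSeries.coeff m ((degExpPS l - 1) ^ k))
        = Bel m / (m.factorial : ℝ)) :
    Bel n = ∑ k ∈ Finset.range (n + 1), S2 n k * x ^ k / (((k + p).choose k : ℕ) : ℝ) := by
  have hcoeff := factorial_mul_coeff_degExpPS_sub_one_pow_of_stirling (hS · n)
  have hsupp : ∀ k ∉ range (n + 1), (p.factorial : ℝ) * x ^ k / ((k + p).factorial : ℝ) *
      coeff n ((degExpPS l - 1) ^ k) = 0 := fun k hk => by
    have h := hcoeff k
    rw [if_neg hk] at h
    rw [(mul_eq_zero.mp h).resolve_left (by positivity), mul_zero]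
  have hBeln := hBel n
  rw [tsum_eq_sum hsupp, eq_div_iff (by positivity), sum_mul] at hBeln
  rw [← hBeln]
  refine sum_congr rfl fun k hk => ?_
  rw [mul_assoc, mul_comm _ (n.factorial : ℝ), hcoeff, if_pos hk, Nat.cast_add_choose]
  field_simp
end

section
/- For every nonnegative integer n and positive integer p, p ∫_0^1 Bel_{n,λ}(x)(1-x)^{p-1} dx = Bel^{(p)}_{n,λ}, where Bel^{(p)}_{n,λ} = Σ_{k=0}^{n} S_{2,λ}(n,k)/C(k+p,k). -/
/-!
Expanding `Bel_{n,λ}` in monomials reduces the identity, term by term, to the Beta integral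
`p ∫₀¹ x^k (1-x)^(p-1) dx = 1 / C(k+p, k)`. Writing `I(k, q) = ∫₀¹ x^k (1-x)^q dx`, the splitting
`(1-x)^(q+1) = (1-x)^q - x (1-x)^q` gives `I(k, q+1) = I(k, q) - I(k+1, q)`, and induction on `q`
from `I(k, 0) = 1/(k+1)` yields `I(k, q) = k! q! / (k+q+1)!`.
-/

open Finset

open Nat intervalIntegral

theorem integral_pow_mul_one_sub_pow (k q : ℕ) :
    ∫ x in (0:ℝ)..1, x ^ k * (1 - x) ^ q = (k ! * q ! : ℝ) / (k + q + 1)! := by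
  induction q generalizing k with
  | zero =>
    simp only [pow_zero, mul_one, integral_pow, add_zero, factorial_succ]
    push_cast
    field_simp
    simp
  | succ q ih =>
    have pascal : ∫ x in (0:ℝ)..1, x ^ k * (1 - x) ^ (q + 1)
        = (∫ x in (0:ℝ)..1, x ^ k * (1 - x) ^ q) - ∫ x in (0:ℝ)..1, x ^ (k + 1) * (1 - x) ^ q := by
      have integrable (j : ℕ) :
          IntervalIntegrable (fun x : ℝ => x ^ j * (1 - x) ^ q) MeasureTheory.volume 0 1 :=
        (by fun_prop : Continuous _).intervalIntegrable _ _
      rw [← integral_sub (integrable k) (integrable (k + 1))]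
      congr 1 with x
      ring
    rw [pascal, ih, ih, show k + 1 + q + 1 = k + q + 1 + 1 by ring,
      show k + (q + 1) + 1 = k + q + 1 + 1 by ring]
    push_cast [factorial_succ]
    field_simp
    ring

theorem succ_mul_integral_pow_mul_one_sub_pow (k q : ℕ) :
    (q + 1 : ℝ) * ∫ x in (0:ℝ)..1, x ^ k * (1 - x) ^ q = 1 / ((k + (q + 1)).choose k : ℝ) := by
  rw [integral_pow_mul_one_sub_pow, cast_add_choose, ← add_assoc, factorial_succ q]
  push_cast
  field_simp

theorem integral_rep_truncated_degenerate_Bell_general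
    (n p : ℕ) (hp : 0 < p) (S2 : ℕ → ℕ → ℝ) :
    (p : ℝ) * ∫ x in (0:ℝ)..1,
        (∑ k ∈ Finset.range (n + 1), S2 n k * x ^ k) * (1 - x) ^ (p - 1)
      = ∑ k ∈ Finset.range (n + 1), S2 n k / (((k + p).choose k : ℕ) : ℝ) := by
  obtain ⟨q, rfl⟩ := Nat.exists_eq_add_one.mpr hp
  simp only [add_tsub_cancel_right, sum_mul, mul_assoc]
  rw [integral_finsetSum fun k _ => (by fun_prop : Continuous _).intervalIntegrable _ _,
    mul_sum]
  refine sum_congr rfl fun k _ => ?_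
  rw [integral_const_mul, mul_left_comm, cast_add_one, succ_mul_integral_pow_mul_one_sub_pow,
    mul_one_div]

theorem integral_rep_truncated_degenerate_Bell
    (l : ℝ) (n p : ℕ) (hp : 0 < p) (S2 : ℕ → ℕ → ℝ)
    (hS : ∀ (y : ℝ) (m : ℕ),
      degFall l y m = ∑ k ∈ Finset.range (m + 1), S2 m k * fall y k) :
    (p : ℝ) * ∫ x in (0:ℝ)..1,
        (∑ k ∈ Finset.range (n + 1), S2 n k * x ^ k) * (1 - x) ^ (p - 1)
      = ∑ k ∈ Finset.range (n + 1), S2 n k / (((k + p).choose k : ℕ) : ℝ) :=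
  integral_rep_truncated_degenerate_Bell_general n p hp S2
end

section
/- For nonnegative integers n and positive integers p, Bel^{(p)}_{n,λ} = Σ_{k=0}^{n} Σ_{m=0}^{p-1} (m+1) C(p, m+1) (-1)^m S_{2,λ}(n,k) / (k+m+1). -/
/-!
Comparing coefficients of `S_{2,λ}(n,k)`, it suffices to show for `p = q + 1` that
`∑_{m ≤ q} (m+1) C(q+1,m+1) (-1)^m / (k+m+1) = 1 / C(k+q+1,k)`.
Absorption `(m+1) C(q+1,m+1) = (q+1) C(q,m)` reduces this to the Beta integral
`A(q,k) := ∑_{m ≤ q} (-1)^m C(q,m) / (k+m+1) = ∫₀¹ t^k (1-t)^q dt = k! q! / (k+q+1)!`,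
which follows by induction on `q`, since Pascal's rule gives `A(q+1,k) = A(q,k) - A(q,k+1)`.
-/

open Finset

open Nat

theorem sum_range_neg_one_pow_mul_choose_succ {R : Type*} [CommRing R] (f : ℕ → R) (q : ℕ) :
    ∑ m ∈ range (q + 2), (-1 : R) ^ m * (q + 1).choose m * f m =
      ∑ m ∈ range (q + 1), (-1 : R) ^ m * q.choose m * (f m - f (m + 1)) := by
  have hshift : ∑ m ∈ range (q + 1), (-1 : R) ^ m * q.choose m * f m =
      ∑ m ∈ range (q + 1), (-1 : R) ^ (m + 1) * q.choose (m + 1) * f (m + 1) + f 0 := by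
    rw [sum_range_succ' _ q,
      sum_range_succ (fun m ↦ (-1 : R) ^ (m + 1) * q.choose (m + 1) * f (m + 1)) q]
    simp
  rw [sum_range_succ']
  simp only [mul_sub, sum_sub_distrib]
  rw [hshift]
  simp only [Nat.choose_succ_succ, Nat.cast_add, mul_add, add_mul, sum_add_distrib, pow_succ,
    mul_neg_one, neg_mul, sum_neg_distrib, pow_zero, choose_zero_right, cast_one, one_mul]
  ring

theorem sum_range_neg_one_pow_mul_choose_div {K : Type*} [Field K] [CharZero K] (q k : ℕ) :
    ∑ m ∈ range (q + 1), (-1 : K) ^ m * q.choose m / (k + m + 1) =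
      k ! * q ! / (k + q + 1)! := by
  induction q generalizing k with
  | zero =>
    have hk : (k ! : K) ≠ 0 := mod_cast k.factorial_ne_zero
    rw [sum_range_one, Nat.factorial_succ, choose_self, factorial_zero]
    push_cast
    field_simp
    ring
  | succ q ih =>
    have hf (m : ℕ) : ((k : K) + (m + 1 : ℕ) + 1)⁻¹ = (((k + 1 : ℕ) : K) + m + 1)⁻¹ := by
      push_cast
      ring
    simp only [div_eq_mul_inv] at ih ⊢
    rw [sum_range_neg_one_pow_mul_choose_succ (fun m ↦ ((k : K) + m + 1)⁻¹) q]
    simp only [hf, mul_sub, sum_sub_distrib, ih]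
    rw [show k + 1 + q + 1 = k + q + 1 + 1 by ring, show k + (q + 1) + 1 = k + q + 1 + 1 from rfl,
      Nat.factorial_succ (k + q + 1), Nat.factorial_succ k, Nat.factorial_succ q]
    have hN : ((k + q + 1)! : K) ≠ 0 := mod_cast (k + q + 1).factorial_ne_zero
    have hkq : ((k + q + 1 + 1 : ℕ) : K) ≠ 0 := mod_cast (k + q + 1).succ_ne_zero
    push_cast at hkq ⊢
    field_simp
    ring

theorem sum_range_add_one_mul_choose_mul_neg_one_pow_div {K : Type*} [Field K] [CharZero K]
    {p : ℕ} (hp : 0 < p) (k : ℕ) :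
    ∑ m ∈ range p, ((m + 1 : ℕ) : K) * (p.choose (m + 1) : ℕ) * (-1) ^ m / ((k + m + 1 : ℕ) : K) =
      (((k + p).choose k : ℕ) : K)⁻¹ := by
  obtain ⟨q, rfl⟩ := Nat.exists_eq_add_one_of_ne_zero hp.ne'
  have absorb (m : ℕ) :
      ((m + 1 : ℕ) : K) * ((q + 1).choose (m + 1) : ℕ) = (q + 1) * q.choose m := by
    exact_mod_cast (mul_comm _ _).trans (q.add_one_mul_choose_eq m).symm
  have hk : (k ! : K) ≠ 0 := mod_cast k.factorial_ne_zero
  have hq : ((q + 1)! : K) ≠ 0 := mod_cast (q + 1).factorial_ne_zero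
  calc ∑ m ∈ range (q + 1),
        ((m + 1 : ℕ) : K) * ((q + 1).choose (m + 1) : ℕ) * (-1) ^ m / ((k + m + 1 : ℕ) : K)
      = (q + 1) * ∑ m ∈ range (q + 1), (-1 : K) ^ m * q.choose m / (k + m + 1) := by
        rw [mul_sum]
        refine sum_congr rfl fun m _ ↦ ?_
        rw [absorb]
        push_cast
        ring
    _ = (q + 1) * (k ! * q ! / (k + q + 1)!) := by rw [sum_range_neg_one_pow_mul_choose_div]
    _ = (((k + (q + 1)).choose k : ℕ) : K)⁻¹ := by
        rw [Nat.cast_add_choose, ← add_assoc, Nat.factorial_succ q]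
        push_cast
        field_simp

theorem truncated_degenerate_Bell_second_explicit_general
    (n p : ℕ) (hp : 0 < p) (S2 : ℕ → ℕ → ℝ) :
    (∑ k ∈ Finset.range (n + 1), S2 n k / (((k + p).choose k : ℕ) : ℝ))
      = ∑ k ∈ Finset.range (n + 1), ∑ m ∈ Finset.range p,
          ((m + 1 : ℕ) : ℝ) * ((p.choose (m + 1) : ℕ) : ℝ) * (-1 : ℝ) ^ m * S2 n k /
            ((k + m + 1 : ℕ) : ℝ) := by
  refine sum_congr rfl fun k _ ↦ ?_
  rw [div_eq_mul_inv, ← sum_range_add_one_mul_choose_mul_neg_one_pow_div hp k, mul_sum]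
  exact sum_congr rfl fun m _ ↦ by ring

theorem truncated_degenerate_Bell_second_explicit
    (l : ℝ) (n p : ℕ) (hp : 0 < p) (S2 : ℕ → ℕ → ℝ)
    (hS : ∀ (y : ℝ) (m : ℕ),
      degFall l y m = ∑ k ∈ Finset.range (m + 1), S2 m k * fall y k) :
    (∑ k ∈ Finset.range (n + 1), S2 n k / (((k + p).choose k : ℕ) : ℝ))
      = ∑ k ∈ Finset.range (n + 1), ∑ m ∈ Finset.range p,
          ((m + 1 : ℕ) : ℝ) * ((p.choose (m + 1) : ℕ) : ℝ) * (-1 : ℝ) ^ m * S2 n k /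
            ((k + m + 1 : ℕ) : ℝ) :=
  truncated_degenerate_Bell_second_explicit_general n p hp S2
end

section
/- For all nonnegative integers m and real x, λ, the degenerate Bell polynomial satisfies the Dobinski formula Bel_{m,λ}(x) = e^{-x} Σ_{k=0}^{∞} (k)_{m,λ} x^k / k!, with the series converging absolutely for every real x. -/
/-!
Expanding `(k)_{m,λ}` in ordinary falling factorials turns the series into a finite combination
`∑ⱼ S_{2,λ}(m,j) ∑ₖ (k)ⱼ xᵏ / k!`. Since `(k)ⱼ = 0` for `k < j` and `(k)ⱼ / k! = 1 / (k - j)!`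
otherwise, the inner series is `xʲ eˣ`. Over `ℝ` summability already means absolute summability.
-/

open Finset

open scoped Nat

lemma fall_natCast_s11 (k j : ℕ) : fall k j = k.descFactorial j := by
  rw [fall, ← descPochhammer_eval_eq_prod_range, descPochhammer_eval_eq_descFactorial]

lemma fall_natCast_add_mul_pow_div_factorial (x : ℝ) (n j : ℕ) :
    fall ↑(n + j) j * x ^ (n + j) / (n + j)! = x ^ j * (x ^ n / n !) := by
  have hfact : ((n + j)! : ℝ) = n ! * (n + j).descFactorial j := by
    have := Nat.factorial_mul_descFactorial (Nat.le_add_left j n)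
    rw [Nat.add_sub_cancel] at this
    exact_mod_cast this.symm
  have hdesc : ((n + j).descFactorial j : ℝ) ≠ 0 := by
    exact_mod_cast (Nat.descFactorial_pos.mpr (Nat.le_add_left j n)).ne'
  rw [fall_natCast_s11, hfact, pow_add]
  field_simp

lemma hasSum_fall_mul_pow_div_factorial (x : ℝ) (j : ℕ) :
    HasSum (fun k : ℕ => fall k j * x ^ k / k !) (x ^ j * Real.exp x) := by
  rw [← hasSum_nat_add_iff' j]
  have hvanish : ∑ i ∈ range j, fall i j * x ^ i / i ! = 0 := sum_eq_zero fun i hi => by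
    rw [fall_natCast_s11, Nat.descFactorial_eq_zero_iff_lt.mpr (mem_range.mp hi)]
    simp
  rw [hvanish, sub_zero, Real.exp_eq_exp_ℝ]
  simpa only [fall_natCast_add_mul_pow_div_factorial] using
    (NormedSpace.expSeries_div_hasSum_exp x).mul_left (x ^ j)

theorem dobinski_degenerate_Bell_polynomial
    (l x : ℝ) (m : ℕ)
    (S2 : ℕ → ℕ → ℝ)
    (hS : ∀ (y : ℝ) (j : ℕ),
      degFall l y j = ∑ k ∈ Finset.range (j + 1), S2 j k * fall y k) :
    Summable (fun k : ℕ => |degFall l k m * x ^ k / (k.factorial : ℝ)|) ∧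
    (∑ k ∈ Finset.range (m + 1), S2 m k * x ^ k)
      = Real.exp (-x) * ∑' k : ℕ, degFall l k m * x ^ k / (k.factorial : ℝ) := by
  have hterm (k : ℕ) : degFall l k m * x ^ k / k ! =
      ∑ j ∈ range (m + 1), S2 m j * (fall k j * x ^ k / k !) := by
    rw [hS, sum_mul, sum_div]
    exact sum_congr rfl fun j _ => by ring
  have hsum : HasSum (fun k : ℕ => degFall l k m * x ^ k / k !)
      (∑ j ∈ range (m + 1), S2 m j * (x ^ j * Real.exp x)) := by
    simpa only [hterm] using
      hasSum_sum fun j _ => (hasSum_fall_mul_pow_div_factorial x j).mul_left (S2 m j)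
  refine ⟨summable_abs_iff.mpr hsum.summable, ?_⟩
  rw [hsum.tsum_eq, mul_sum]
  refine sum_congr rfl fun j _ => ?_
  rw [Real.exp_neg]
  field_simp
end
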